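/- Let G be a simple graph on n vertices. If G is both L-exact and Q-exact, then G is regular (and consequently also A-exact). -/

import Mathlib

open Finset Matrix BigOperators

set_option linter.unusedSectionVars false

variable {V : Type*} [Fintype V] [DecidableEq V]

/-- Number of edges of `G` with exactly one endpoint in `S` (each unordered edge counted once,
as the ordered pair going out of `S`). -/
def cutNum (G : SimpleGraph V) [DecidableRel G.Adj] (S : Finset V) : ℕ :=
  (Finset.univ.filter (fun p : V × V => G.Adj p.1 p.2 ∧ p.1 ∈ S ∧ p.2 ∉ S)).card

/-- Number of edges of `G` with both endpoints in `S` or both outside `S`. -/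
def cohNum (G : SimpleGraph V) [DecidableRel G.Adj] (S : Finset V) : ℕ :=
  G.edgeFinset.card - cutNum G S

/-- The maximum cut of `G`. -/
def mcut (G : SimpleGraph V) [DecidableRel G.Adj] : ℕ :=
  Finset.univ.sup (fun S : Finset V => cutNum G S)

/-- The ±1 partition vector of a vertex subset `S`. -/
def pvec (S : Finset V) : V → ℝ := fun v => if v ∈ S then 1 else -1

/-- The signless Laplacian matrix `Q = D + A` of a graph. -/
def signlessLap (G : SimpleGraph V) [DecidableRel G.Adj] : Matrix V V ℝ :=
  G.degMatrix ℝ + G.adjMatrix ℝ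

lemma isHermitian_adj (G : SimpleGraph V) [DecidableRel G.Adj] :
    (G.adjMatrix ℝ).IsHermitian := by
  rw [IsHermitian, conjTranspose_eq_transpose_of_trivial]
  exact SimpleGraph.isSymm_adjMatrix G

lemma isHermitian_lap (G : SimpleGraph V) [DecidableRel G.Adj] :
    (G.lapMatrix ℝ).IsHermitian := by
  rw [IsHermitian, conjTranspose_eq_transpose_of_trivial]
  exact G.isSymm_lapMatrix ℝ

lemma isHermitian_signlessLap (G : SimpleGraph V) [DecidableRel G.Adj] :
    (signlessLap G).IsHermitian := by
  rw [IsHermitian, conjTranspose_eq_transpose_of_trivial]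
  exact (G.isSymm_degMatrix ℝ).add (SimpleGraph.isSymm_adjMatrix G)

/-- The spanning subgraph of `G` consisting of the edges between `S` and its complement. -/
def crossGraph (G : SimpleGraph V) (S : Finset V) : SimpleGraph V where
  Adj u v := G.Adj u v ∧ ((u ∈ S) ↔ (v ∉ S))
  symm := ⟨fun u v h => ⟨h.1.symm, by tauto⟩⟩
  loopless := ⟨fun v h => G.loopless.irrefl v h.1⟩

/-- The spanning subgraph of `G` consisting of the edges inside `S` or inside its complement. -/
def insideGraph (G : SimpleGraph V) (S : Finset V) : SimpleGraph V where
  Adj u v := G.Adj u v ∧ ((u ∈ S) ↔ (v ∈ S))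
  symm := ⟨fun u v h => ⟨h.1.symm, h.2.symm⟩⟩
  loopless := ⟨fun v h => G.loopless.irrefl v h.1⟩

instance (G : SimpleGraph V) [DecidableRel G.Adj] (S : Finset V) :
    DecidableRel (crossGraph G S).Adj := fun _ _ => inferInstanceAs (Decidable (_ ∧ _))

instance (G : SimpleGraph V) [DecidableRel G.Adj] (S : Finset V) :
    DecidableRel (insideGraph G S).Adj := fun _ _ => inferInstanceAs (Decidable (_ ∧ _))

/-- The second largest value (with multiplicity) of a finitely indexed family of reals. -/
noncomputable def secondLargest (f : V → ℝ) : ℝ :=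
  (Multiset.sort (Finset.univ.val.map f) (· ≤ ·)).getD (Fintype.card V - 2) 0

/-- The join of two graphs: disjoint union plus all edges in between. -/
def joinGraph {α β : Type*} (H₁ : SimpleGraph α) (H₂ : SimpleGraph β) :
    SimpleGraph (α ⊕ β) where
  Adj x y :=
    match x, y with
    | Sum.inl u, Sum.inl v => H₁.Adj u v
    | Sum.inr u, Sum.inr v => H₂.Adj u v
    | Sum.inl _, Sum.inr _ => True
    | Sum.inr _, Sum.inl _ => True
  symm := by constructor; rintro (u | u) (v | v) h <;> first | exact h.symm | trivial
  loopless := by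
    constructor
    rintro (u | u) h
    · exact H₁.loopless.irrefl u h
    · exact H₂.loopless.irrefl u h

instance {α β : Type*} (H₁ : SimpleGraph α) (H₂ : SimpleGraph β)
    [DecidableRel H₁.Adj] [DecidableRel H₂.Adj] :
    DecidableRel (joinGraph H₁ H₂).Adj := fun x y =>
  match x, y with
  | Sum.inl u, Sum.inl v => inferInstanceAs (Decidable (H₁.Adj u v))
  | Sum.inr u, Sum.inr v => inferInstanceAs (Decidable (H₂.Adj u v))
  | Sum.inl _, Sum.inr _ => inferInstanceAs (Decidable True)
  | Sum.inr _, Sum.inl _ => inferInstanceAs (Decidable True)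

/-! For a maximum cut `S` with ±1 vector `x = pvec S`, the Rayleigh quotients of `L` and `Q`
at `x` are `4 mcut / n` and `4 (m - mcut) / n`. Exactness says that these are `μ₁(L)` and
`qₙ(Q)`, so `x` is an eigenvector of both matrices, hence of `L + Q = 2D`; since `x` has no zero
entry, every degree equals `(μ₁ + qₙ) / 2`. For an `r`-regular graph `A = r I - L`, so
`λₙ(A) = r - μ₁(L) = 2m/n - 4 mcut/n`. -/
open scoped MatrixOrder ComplexOrder Pointwise

namespace Matrix.IsHermitian

variable {𝕜 n : Type*} [RCLike 𝕜] [Fintype n] [DecidableEq n] {A : Matrix n n 𝕜}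

lemma posSemidef_iSup_eigenvalues_smul_one_sub (hA : A.IsHermitian) :
    ((⨆ i, hA.eigenvalues i) • 1 - A).PosSemidef := by
  rw [← le_iff, ← Algebra.algebraMap_eq_smul_one,
    le_algebraMap_iff_spectrum_le hA.isSelfAdjoint, hA.spectrum_real_eq_range_eigenvalues]
  rintro _ ⟨i, rfl⟩
  exact le_ciSup (Set.finite_range _).bddAbove i

lemma posSemidef_sub_iInf_eigenvalues_smul_one (hA : A.IsHermitian) :
    (A - (⨅ i, hA.eigenvalues i) • 1).PosSemidef := by
  rw [← le_iff, ← Algebra.algebraMap_eq_smul_one,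
    algebraMap_le_iff_le_spectrum hA.isSelfAdjoint, hA.spectrum_real_eq_range_eigenvalues]
  rintro _ ⟨i, rfl⟩
  exact ciInf_le (Set.finite_range _).bddBelow i

lemma mulVec_eq_iSup_smul_of_dotProduct_eq (hA : A.IsHermitian) {x : n → 𝕜}
    (hx : star x ⬝ᵥ (A *ᵥ x) = (⨆ i, hA.eigenvalues i) • (star x ⬝ᵥ x)) :
    A *ᵥ x = (⨆ i, hA.eigenvalues i) • x := by
  have h := hA.posSemidef_iSup_eigenvalues_smul_one_sub.dotProduct_mulVec_zero_iff x
  rw [sub_mulVec, smul_mulVec, one_mulVec, dotProduct_sub, dotProduct_smul, hx, sub_self,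
    sub_eq_zero] at h
  exact (h.mp rfl).symm

lemma mulVec_eq_iInf_smul_of_dotProduct_eq (hA : A.IsHermitian) {x : n → 𝕜}
    (hx : star x ⬝ᵥ (A *ᵥ x) = (⨅ i, hA.eigenvalues i) • (star x ⬝ᵥ x)) :
    A *ᵥ x = (⨅ i, hA.eigenvalues i) • x := by
  have h := hA.posSemidef_sub_iInf_eigenvalues_smul_one.dotProduct_mulVec_zero_iff x
  rw [sub_mulVec, smul_mulVec, one_mulVec, dotProduct_sub, dotProduct_smul, hx, sub_self,
    sub_eq_zero] at h
  exact h.mp rfl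

lemma iInf_eigenvalues_smul_one_sub [Nonempty n] {B : Matrix n n 𝕜} (hA : A.IsHermitian)
    (hB : B.IsHermitian) (c : ℝ) (h : B = c • 1 - A) :
    ⨅ i, hB.eigenvalues i = c - ⨆ i, hA.eigenvalues i := by
  have hspec : Set.range hB.eigenvalues = ({c} : Set ℝ) - Set.range hA.eigenvalues := by
    rw [← hB.spectrum_real_eq_range_eigenvalues, ← hA.spectrum_real_eq_range_eigenvalues,
      spectrum.singleton_sub_eq, Algebra.algebraMap_eq_smul_one, h]
  apply le_antisymm
  · obtain ⟨i, hi⟩ := exists_eq_ciSup_of_finite (f := hA.eigenvalues)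
    obtain ⟨j, hj⟩ : c - ⨆ i, hA.eigenvalues i ∈ Set.range hB.eigenvalues :=
      hspec ▸ Set.sub_mem_sub rfl ⟨i, hi⟩
    exact hj ▸ ciInf_le (Set.finite_range _).bddBelow j
  · refine le_ciInf fun j => ?_
    obtain ⟨_, rfl, _, ⟨i, rfl⟩, hi⟩ := hspec ▸ Set.mem_range_self (f := hB.eigenvalues) j
    rw [← hi]
    exact sub_le_sub_left (le_ciSup (Set.finite_range _).bddAbove i) _

end Matrix.IsHermitian

section Partition

variable (G : SimpleGraph V) [DecidableRel G.Adj] (S : Finset V)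

lemma exists_cutNum_eq_mcut : ∃ S, cutNum G S = mcut G := by
  obtain ⟨S, -, hS⟩ := Finset.exists_mem_eq_sup univ univ_nonempty (cutNum G)
  exact ⟨S, hS.symm⟩

lemma cutNum_compl : cutNum G Sᶜ = cutNum G S := by
  refine Finset.card_bij (fun p _ => p.swap) ?_ (fun _ _ _ _ h => Prod.swap_injective h) ?_
  · simp only [mem_filter, mem_univ, true_and, mem_compl, not_not, Prod.fst_swap, Prod.snd_swap]
    exact fun p ⟨hp, h1, h2⟩ => ⟨hp.symm, h2, h1⟩
  · simp only [mem_filter, mem_univ, true_and, mem_compl, not_not, exists_prop, Prod.exists]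
    exact fun p ⟨hp, h1, h2⟩ => ⟨p.2, p.1, ⟨hp.symm, h2, h1⟩, rfl⟩

lemma cutNum_eq_sum :
    (cutNum G S : ℝ) = ∑ i, ∑ j, if G.Adj i j ∧ i ∈ S ∧ j ∉ S then 1 else 0 := by
  rw [cutNum, natCast_card_filter, ← Fintype.sum_prod_type']

lemma pvec_mul_self (v : V) : pvec S v * pvec S v = 1 := by
  by_cases hv : v ∈ S <;> simp [pvec, hv]

lemma pvec_ne_zero (v : V) : pvec S v ≠ 0 := by
  by_cases hv : v ∈ S <;> simp [pvec, hv]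

lemma dotProduct_pvec_self : pvec S ⬝ᵥ pvec S = Fintype.card V := by
  simp [dotProduct, pvec_mul_self]

lemma dotProduct_degMatrix_mulVec_pvec :
    pvec S ⬝ᵥ (G.degMatrix ℝ *ᵥ pvec S) = 2 * #G.edgeFinset := by
  simp_rw [SimpleGraph.dotProduct_mulVec_degMatrix, mul_assoc, pvec_mul_self, mul_one]
  exact_mod_cast G.sum_degrees_eq_twice_card_edges

lemma dotProduct_lapMatrix_mulVec_pvec :
    pvec S ⬝ᵥ (G.lapMatrix ℝ *ᵥ pvec S) = 4 * cutNum G S := by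
  have hsq : ∀ i j, (if G.Adj i j then (pvec S i - pvec S j) ^ 2 else 0) =
      4 * ((if G.Adj i j ∧ i ∈ S ∧ j ∉ S then 1 else 0) +
        (if G.Adj i j ∧ i ∈ Sᶜ ∧ j ∉ Sᶜ then 1 else 0)) := by
    intro i j
    by_cases hij : G.Adj i j <;> by_cases hi : i ∈ S <;> by_cases hj : j ∈ S <;>
      simp [pvec, hij, hi, hj] <;> norm_num
  rw [← toLinearMap₂'_apply', SimpleGraph.lapMatrix_toLinearMap₂']
  simp_rw [hsq, ← mul_sum, sum_add_distrib, ← cutNum_eq_sum, cutNum_compl]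
  ring

lemma lapMatrix_add_signlessLap :
    G.lapMatrix ℝ + signlessLap G = (2 : ℝ) • G.degMatrix ℝ := by
  rw [SimpleGraph.lapMatrix, signlessLap, two_smul]
  abel

lemma dotProduct_signlessLap_mulVec_pvec :
    pvec S ⬝ᵥ (signlessLap G *ᵥ pvec S) = 4 * ((#G.edgeFinset : ℝ) - cutNum G S) := by
  have h := congrArg (fun M => pvec S ⬝ᵥ (M *ᵥ pvec S)) (lapMatrix_add_signlessLap G)
  simp only [add_mulVec, dotProduct_add, smul_mulVec, dotProduct_smul, smul_eq_mul,
    dotProduct_lapMatrix_mulVec_pvec, dotProduct_degMatrix_mulVec_pvec] at h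
  linarith

end Partition

section Regular

variable {G : SimpleGraph V} [DecidableRel G.Adj]

lemma degree_eq_of_mulVec_eq_smul {x : V → ℝ} {μ q : ℝ}
    (hL : G.lapMatrix ℝ *ᵥ x = μ • x) (hQ : signlessLap G *ᵥ x = q • x) {v : V}
    (hv : x v ≠ 0) :
    (G.degree v : ℝ) = (μ + q) / 2 := by
  have h := congrFun (congrArg (· *ᵥ x) (lapMatrix_add_signlessLap G)) v
  simp only [add_mulVec, hL, hQ, smul_mulVec, Pi.add_apply, Pi.smul_apply, smul_eq_mul,
    SimpleGraph.degMatrix_mulVec_apply] at h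
  field_simp
  exact mul_right_cancel₀ hv (by linarith)

namespace SimpleGraph.IsRegularOfDegree

variable {r : ℕ} (hG : G.IsRegularOfDegree r)
include hG

lemma card_mul_eq_two_mul_card_edgeFinset : Fintype.card V * r = 2 * #G.edgeFinset := by
  rw [← G.sum_degrees_eq_twice_card_edges, sum_congr rfl fun v _ => hG v, sum_const, card_univ,
    smul_eq_mul]

lemma degMatrix_eq : G.degMatrix ℝ = (r : ℝ) • 1 := by
  rw [SimpleGraph.degMatrix, funext fun v => congrArg (Nat.cast (R := ℝ)) (hG v),
    ← smul_one_eq_diagonal]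

lemma iInf_eigenvalues_adjMatrix [Nonempty V] :
    ⨅ i, (isHermitian_adj G).eigenvalues i = r - ⨆ i, (isHermitian_lap G).eigenvalues i :=
  (isHermitian_lap G).iInf_eigenvalues_smul_one_sub (isHermitian_adj G) r <| by
    rw [SimpleGraph.lapMatrix, hG.degMatrix_eq, sub_sub_cancel]

end SimpleGraph.IsRegularOfDegree

end Regular

/-- If `G` is both `L`-exact and `Q`-exact, then `G` is regular and also `A`-exact. -/
theorem stmt15 (G : SimpleGraph V) [DecidableRel G.Adj]
    (hL : (⨆ i, (isHermitian_lap G).eigenvalues i) = 4 / (Fintype.card V : ℝ) * mcut G)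
    (hQ : (⨅ i, (isHermitian_signlessLap G).eigenvalues i) = 4 / (Fintype.card V : ℝ) * ((G.edgeFinset.card : ℝ) - mcut G)) :
    (∃ r : ℕ, G.IsRegularOfDegree r) ∧
      (⨅ i, (isHermitian_adj G).eigenvalues i) = 2 / (Fintype.card V : ℝ) * ((G.edgeFinset.card : ℝ) - 2 * mcut G) := by
  rcases isEmpty_or_nonempty V with hV | hV
  · exact ⟨⟨0, .of_isEmpty⟩, by simp⟩
  have v₀ : V := Classical.arbitrary V
  have hn : (Fintype.card V : ℝ) ≠ 0 := Nat.cast_ne_zero.mpr Fintype.card_ne_zero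
  obtain ⟨S, hS⟩ := exists_cutNum_eq_mcut G
  have hLx := (isHermitian_lap G).mulVec_eq_iSup_smul_of_dotProduct_eq (x := pvec S) <| by
    rw [star_trivial, dotProduct_lapMatrix_mulVec_pvec, dotProduct_pvec_self, hL, hS, smul_eq_mul]
    field_simp
  have hQx := (isHermitian_signlessLap G).mulVec_eq_iInf_smul_of_dotProduct_eq (x := pvec S) <| by
    rw [star_trivial, dotProduct_signlessLap_mulVec_pvec, dotProduct_pvec_self, hQ, hS, smul_eq_mul]
    field_simp
  have hdeg v := degree_eq_of_mulVec_eq_smul hLx hQx (pvec_ne_zero S v)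
  have hreg : G.IsRegularOfDegree (G.degree v₀) := fun v => by
    exact_mod_cast (hdeg v).trans (hdeg v₀).symm
  refine ⟨⟨_, hreg⟩, ?_⟩
  have hrm : (Fintype.card V : ℝ) * G.degree v₀ = 2 * #G.edgeFinset := by
    exact_mod_cast hreg.card_mul_eq_two_mul_card_edgeFinset
  rw [hreg.iInf_eigenvalues_adjMatrix, hL]
  field_simp
  linarith
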